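/- Let k ≥ 2, n ≥ 1 be integers and δ ∈ ℂ nonzero and not a root of unity. Suppose the numbers t_j := δ^j·a − 2/(k−1) (0 ≤ j ≤ k), with a := (δ^{n−1} − 1)/(δ^{n+k} − 1)·(k+1)/(k−1), satisfy Σ_{j=0}^k (t_j + 2/(k−1)) = (k+1)/(k−1)·(1/δ + 1). Then (δ^{n+k} − 1)(δ² − 1) = δ(δ^{k+1} − 1)(δ^{n−1} − 1). -/

import Mathlib

open Finset

theorem mul_sq_sub_one_eq_of_geom_sum_mul_div {K : Type*} [Field K] {δ N D : K} (m : ℕ)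
    (hδ0 : δ ≠ 0) (hδ1 : δ ≠ 1) (hD : D ≠ 0)
    (h : (∑ j ∈ range m, δ ^ j) * (N / D) = 1 / δ + 1) :
    D * (δ ^ 2 - 1) = δ * (δ ^ m - 1) * N := by
  have hδ1' : δ - 1 ≠ 0 := sub_ne_zero.mpr hδ1
  rw [geom_sum_eq hδ1] at h
  field_simp at h
  linear_combination -h

theorem stmt_12_general (k n : ℕ) (hk : 2 ≤ k) (δ : ℂ)
    (hδ0 : δ ≠ 0)
    (hnk : δ ^ (n + k) ≠ 1) (h1 : δ ≠ 1)
    (a : ℂ)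
    (ha : a = (δ ^ (n - 1) - 1) / (δ ^ (n + k) - 1) * (((k : ℂ) + 1) / ((k : ℂ) - 1)))
    (t : ℕ → ℂ) (ht : ∀ j, t j = δ ^ j * a - 2 / ((k : ℂ) - 1))
    (hsum : ∑ j ∈ Finset.range (k + 1), (t j + 2 / ((k : ℂ) - 1)) =
      ((k : ℂ) + 1) / ((k : ℂ) - 1) * (1 / δ + 1)) :
    (δ ^ (n + k) - 1) * (δ ^ 2 - 1) = δ * (δ ^ (k + 1) - 1) * (δ ^ (n - 1) - 1) := by
  have hk1 : (k : ℂ) - 1 ≠ 0 := sub_ne_zero.mpr (by exact_mod_cast (by omega : k ≠ 1))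
  have hc : ((k : ℂ) + 1) / ((k : ℂ) - 1) ≠ 0 := div_ne_zero (Nat.cast_add_one_ne_zero k) hk1
  have hgeom : (∑ j ∈ range (k + 1), δ ^ j) * ((δ ^ (n - 1) - 1) / (δ ^ (n + k) - 1)) =
      1 / δ + 1 := by
    refine mul_left_cancel₀ hc ?_
    simp only [ht, sub_add_cancel, ← Finset.sum_mul, ha] at hsum
    linear_combination hsum
  exact mul_sq_sub_one_eq_of_geom_sum_mul_div _ hδ0 h1 (sub_ne_zero.mpr hnk) hgeom

/-- Derivation of the defining polynomial of the multiplier δ from the two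
expressions for Σ t_j. -/
theorem stmt_12 (k n : ℕ) (hk : 2 ≤ k) (hn : 1 ≤ n) (δ : ℂ)
    (hδ0 : δ ≠ 0) (hroots : ∀ m : ℕ, 0 < m → δ ^ m ≠ 1)
    (hnk : δ ^ (n + k) ≠ 1) (hk1 : δ ^ (k + 1) ≠ 1) (h1 : δ ≠ 1)
    (a : ℂ)
    (ha : a = (δ ^ (n - 1) - 1) / (δ ^ (n + k) - 1) * (((k : ℂ) + 1) / ((k : ℂ) - 1)))
    (t : ℕ → ℂ) (ht : ∀ j, t j = δ ^ j * a - 2 / ((k : ℂ) - 1))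
    (hsum : ∑ j ∈ Finset.range (k + 1), (t j + 2 / ((k : ℂ) - 1)) =
      ((k : ℂ) + 1) / ((k : ℂ) - 1) * (1 / δ + 1)) :
    (δ ^ (n + k) - 1) * (δ ^ 2 - 1) = δ * (δ ^ (k + 1) - 1) * (δ ^ (n - 1) - 1) :=
  stmt_12_general k n hk δ hδ0 hnk h1 a ha t ht hsum
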